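/- Let R be a commutative ring, S a multiplicative subset of R, and E an R-module. Then the following are equivalent: (i) for every short exact sequence 0 → A →f B →g C → 0 of R-modules, the induced sequence 0 → Hom_R(C,E) →g* Hom_R(B,E) →f* Hom_R(A,E) → 0 is u-S-exact; (ii) for every R-module M, Ext¹_R(M,E) is u-S-torsion. -/

import Mathlib

open CategoryTheory

universe u

/-- The `n`-th Ext group of two `A`-modules, as an `A`-module. -/
noncomputable def extMod (A : Type u) [CommRing A] (n : ℕ) (M N : ModuleCat.{u} A) :
    ModuleCat A :=
  ((Ext A (ModuleCat.{u} A) n).obj (Opposite.op M)).obj N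

section helpers

variable {R : Type u} [CommRing R]

private lemma descend_of_surjective {A B E : Type*} [AddCommGroup A] [Module R A]
    [AddCommGroup B] [Module R B] [AddCommGroup E] [Module R E]
    (g : A →ₗ[R] B) (hg : Function.Surjective g) (h : A →ₗ[R] E)
    (hker : LinearMap.ker g ≤ LinearMap.ker h) :
    ∃ h' : B →ₗ[R] E, ∀ a, h' (g a) = h a := by
  refine ⟨((LinearMap.ker g).liftQ h hker).comp
      (g.quotKerEquivOfSurjective hg).symm.toLinearMap, fun a => ?_⟩
  have h1 : (g.quotKerEquivOfSurjective hg) (Submodule.Quotient.mk a) = g a := rfl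
  rw [LinearMap.comp_apply, LinearEquiv.coe_toLinearMap, ← h1, LinearEquiv.symm_apply_apply]
  simp

variable (E : Type u) [AddCommGroup E] [Module R E]

private lemma ext_torsion_iff (M : ModuleCat.{u} R) (P : ProjectiveResolution M) (s : R) :
    (∀ x : extMod R 1 M (ModuleCat.of R E), s • x = 0) ↔
    ∀ φ : P.complex.X 1 →ₗ[R] E, φ.comp (P.complex.d 2 1).hom = 0 →
      ∃ ψ : P.complex.X 0 →ₗ[R] E, s • φ = ψ.comp (P.complex.d 1 0).hom := by
  set L := P.complex.linearYonedaObj R (ModuleCat.of R E) with hL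
  set Sc := L.sc' 0 1 2 with hSc
  have e : extMod R 1 M (ModuleCat.of R E) ≅ Sc.moduleCatLeftHomologyData.H :=
    P.isoExt 1 (ModuleCat.of R E) ≪≫ L.homologyIsoSc' 0 1 2 (by simp) (by simp) ≪≫
      Sc.moduleCatHomologyIso
  have step1 : (∀ x : extMod R 1 M (ModuleCat.of R E), s • x = 0) ↔
      (∀ y : Sc.moduleCatLeftHomologyData.H, s • y = 0) := by
    have hih : ∀ y, e.hom (e.inv y) = y := fun y => e.inv_hom_id_apply y
    have hhi : ∀ x, e.inv (e.hom x) = x := fun x => e.hom_inv_id_apply x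
    constructor
    · intro hx y
      calc s • y = s • e.hom (e.inv y) := by rw [hih]
        _ = e.hom (s • e.inv y) := (map_smul e.hom.hom s (e.inv y)).symm
        _ = e.hom 0 := by rw [hx (e.inv y)]
        _ = 0 := map_zero e.hom.hom
    · intro hy x
      calc s • x = e.inv (e.hom (s • x)) := by rw [hhi]
        _ = e.inv (s • e.hom x) := by rw [map_smul e.hom.hom s x]
        _ = e.inv 0 := by rw [hy (e.hom x)]
        _ = 0 := map_zero e.inv.hom
  rw [step1]
  constructor
  · intro hy φ hφ
    have hz : Sc.g.hom (ModuleCat.ofHom φ : P.complex.X 1 ⟶ ModuleCat.of R E) = 0 := by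
      have h' : P.complex.d 2 1 ≫ ModuleCat.ofHom φ = 0 := ModuleCat.hom_ext hφ
      exact h'
    set z : LinearMap.ker Sc.g.hom := ⟨ModuleCat.ofHom φ, hz⟩ with hzdef
    have h0 : s • (Submodule.Quotient.mk z :
        LinearMap.ker Sc.g.hom ⧸ LinearMap.range Sc.moduleCatToCycles) = 0 := hy _
    rw [← Submodule.Quotient.mk_smul, Submodule.Quotient.mk_eq_zero] at h0
    obtain ⟨ψ, hψ⟩ := h0
    refine ⟨ψ.hom, ?_⟩
    have := congrArg ModuleCat.Hom.hom (congrArg Subtype.val hψ)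
    exact this.symm
  · intro hφ y
    obtain ⟨z, rfl⟩ := Submodule.Quotient.mk_surjective _ y
    obtain ⟨φ, hz⟩ := z
    obtain ⟨ψ, hψ⟩ := hφ φ.hom (congrArg ModuleCat.Hom.hom hz)
    change s • (Submodule.Quotient.mk (⟨φ, hz⟩ : LinearMap.ker Sc.g.hom) :
      LinearMap.ker Sc.g.hom ⧸ LinearMap.range Sc.moduleCatToCycles) = 0
    rw [← Submodule.Quotient.mk_smul, Submodule.Quotient.mk_eq_zero]
    exact ⟨ModuleCat.ofHom ψ, Subtype.ext (ModuleCat.hom_ext hψ.symm)⟩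

end helpers

/-- For an `R`-module `E`, the following are equivalent: (i) for every short exact
sequence `0 → A → B → C → 0` the induced sequence
`0 → Hom(C,E) → Hom(B,E) → Hom(A,E) → 0` is `u`-`S`-exact; (ii) `Ext¹_R(M,E)` is
`u`-`S`-torsion for every `R`-module `M`. -/
theorem uS_injective_hom_characterization
    (R : Type u) [CommRing R] (S : Submonoid R)
    (E : Type u) [AddCommGroup E] [Module R E] :
    (∀ (A B C : Type u) (_ : AddCommGroup A) (_ : Module R A)
        (_ : AddCommGroup B) (_ : Module R B) (_ : AddCommGroup C) (_ : Module R C)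
        (f : A →ₗ[R] B) (g : B →ₗ[R] C),
        Function.Injective f → Function.Surjective g → Function.Exact f g →
        -- the induced sequence 0 → Hom(C,E) → Hom(B,E) → Hom(A,E) → 0 is u-S-exact:
        -- u-S-exact at Hom(C,E)
        ((∃ s ∈ S, ∀ h : C →ₗ[R] E, h ∘ₗ g = 0 → s • h = 0) ∧
        -- u-S-exact at Hom(B,E)
        (∃ s ∈ S,
          (∀ h : B →ₗ[R] E, h ∘ₗ f = 0 → ∃ h' : C →ₗ[R] E, s • h = h' ∘ₗ g) ∧
          (∀ h' : C →ₗ[R] E, (s • (h' ∘ₗ g)) ∘ₗ f = 0)) ∧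
        -- u-S-exact at Hom(A,E)
        (∃ s ∈ S, ∀ h : A →ₗ[R] E, ∃ h' : B →ₗ[R] E, s • h = h' ∘ₗ f))) ↔
    (∀ M : ModuleCat.{u} R, ∃ s ∈ S,
      ∀ x : extMod R 1 M (ModuleCat.of R E), s • x = 0) := by
  constructor
  · -- (i) → (ii)
    intro hyp M
    obtain ⟨P⟩ := (inferInstance : HasProjectiveResolution M).out
    set π0 : ↑(P.complex.X 0) →ₗ[R] ↑M := (P.π.f 0).hom with hπ0def
    have hπ0 : Function.Surjective π0 :=
      (ModuleCat.epi_iff_surjective (P.π.f 0)).mp inferInstance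
    have hex1 : LinearMap.range (P.complex.d 1 0).hom = LinearMap.ker π0 :=
      P.exact₀.moduleCat_range_eq_ker
    have hex2 : LinearMap.range (P.complex.d 2 1).hom = LinearMap.ker (P.complex.d 1 0).hom :=
      (P.exact_succ 0).moduleCat_range_eq_ker
    obtain ⟨-, -, s, hs, hext⟩ :=
      hyp ↥(LinearMap.ker π0) ↑(P.complex.X 0) ↑M inferInstance inferInstance
        inferInstance inferInstance inferInstance inferInstance
        (LinearMap.ker π0).subtype π0 (Submodule.injective_subtype _) hπ0
        (LinearMap.exact_iff.mpr (Submodule.range_subtype _).symm)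
    refine ⟨s, hs, ?_⟩
    rw [ext_torsion_iff E M P s]
    intro φ hφ
    have hmem : ∀ x, (P.complex.d 1 0).hom x ∈ LinearMap.ker π0 := fun x =>
      hex1 ▸ LinearMap.mem_range_self _ x
    set d10' : ↑(P.complex.X 1) →ₗ[R] ↥(LinearMap.ker π0) :=
      LinearMap.codRestrict _ (P.complex.d 1 0).hom hmem with hd10'
    have hsurj : Function.Surjective d10' := by
      rintro ⟨k, hk⟩
      rw [← hex1] at hk
      obtain ⟨x, hx⟩ := hk
      exact ⟨x, Subtype.ext hx⟩
    have hker : LinearMap.ker d10' ≤ LinearMap.ker φ := by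
      intro x hx
      have hx0 : (P.complex.d 1 0) x = 0 := congrArg Subtype.val hx
      have hx1 : x ∈ LinearMap.range (P.complex.d 2 1).hom := by
        rw [hex2]; exact hx0
      obtain ⟨y, rfl⟩ := hx1
      simpa using LinearMap.congr_fun hφ y
    obtain ⟨h, hh⟩ := descend_of_surjective d10' hsurj φ hker
    obtain ⟨h', hh'⟩ := hext h
    refine ⟨h', ?_⟩
    ext x
    calc (s • φ) x = s • φ x := rfl
      _ = s • h (d10' x) := by rw [hh]
      _ = (s • h) (d10' x) := rfl
      _ = (h' ∘ₗ (LinearMap.ker π0).subtype) (d10' x) := by rw [hh']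
      _ = (h'.comp (P.complex.d 1 0).hom) x := rfl
  · intro hyp A B C iA mA iB mB iC mC f g hf hg hexact
    have hkerg : LinearMap.ker g = LinearMap.range f := LinearMap.exact_iff.mp hexact
    refine ⟨⟨1, S.one_mem, fun h hh => ?_⟩,
      ⟨1, S.one_mem, fun h hh => ?_, fun h' => ?_⟩, ?_⟩
    · rw [one_smul]
      ext c
      obtain ⟨b, rfl⟩ := hg c
      simpa using LinearMap.congr_fun hh b
    · obtain ⟨h', hh'⟩ := descend_of_surjective g hg h (by
        intro x hx
        rw [hkerg] at hx
        obtain ⟨a, rfl⟩ := hx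
        simpa using LinearMap.congr_fun hh a)
      refine ⟨h', ?_⟩
      rw [one_smul]
      ext b
      simpa using (hh' b).symm
    · ext a
      simp [hexact.apply_apply_eq_zero a]
    · obtain ⟨s, hs, htors⟩ := hyp (ModuleCat.of R C)
      obtain ⟨P⟩ := (inferInstance : HasProjectiveResolution (ModuleCat.of R C)).out
      have key := (ext_torsion_iff E (ModuleCat.of R C) P s).mp htors
      set π0 : ↑(P.complex.X 0) →ₗ[R] C := (P.π.f 0).hom with hπ0def
      have hπ0 : Function.Surjective π0 :=
        (ModuleCat.epi_iff_surjective (P.π.f 0)).mp inferInstance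
      have hex1 : LinearMap.range (P.complex.d 1 0).hom = LinearMap.ker π0 :=
        P.exact₀.moduleCat_range_eq_ker
      have hd10π : ∀ x, π0 ((P.complex.d 1 0) x) = 0 := fun x =>
        LinearMap.congr_fun (congrArg ModuleCat.Hom.hom P.complex_d_comp_π_f_zero) x
      haveI hproj : Module.Projective R ↑(P.complex.X 0) := by
        rw [IsProjective.iff_projective]
        exact (inferInstance : Projective (P.complex.X 0))
      obtain ⟨α, hα⟩ := Module.projective_lifting_property g π0 hg
      have hgα : ∀ p, g (α p) = π0 p := fun p => LinearMap.congr_fun hα p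
      refine ⟨s, hs, fun h => ?_⟩
      have hmemf : ∀ x, α ((P.complex.d 1 0) x) ∈ LinearMap.range f := fun x => by
        rw [← hkerg]
        show g _ = 0
        rw [hgα, hd10π x]
      set eA := LinearEquiv.ofInjective f hf with heA
      set β : ↑(P.complex.X 1) →ₗ[R] A :=
        eA.symm.toLinearMap.comp
          (LinearMap.codRestrict _ (α.comp (P.complex.d 1 0).hom) hmemf) with hβ
      have hfβ : ∀ x, f (β x) = α ((P.complex.d 1 0) x) := fun x => by
        have h1 : f (β x) = ((eA (β x)) : B) := (LinearEquiv.ofInjective_apply f _).symm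
        rw [h1]
        show ((eA (eA.symm ⟨α ((P.complex.d 1 0) x), hmemf x⟩)) : B) = _
        rw [eA.apply_symm_apply]
      have hφcoc : (h.comp β).comp (P.complex.d 2 1).hom = 0 := by
        ext y
        have h3 : P.complex.d 2 1 ≫ P.complex.d 1 0 = 0 := P.complex.d_comp_d 2 1 0
        have h3' : (P.complex.d 1 0) ((P.complex.d 2 1) y) = 0 := LinearMap.congr_fun (congrArg ModuleCat.Hom.hom h3) y
        have h2 : f (β ((P.complex.d 2 1) y)) = 0 := by
          rw [hfβ, h3', map_zero]
        have h4 : β ((P.complex.d 2 1) y) = 0 := hf (by rw [h2, map_zero])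
        simp [h4]
      obtain ⟨ψ, hψ⟩ := key (h.comp β) hφcoc
      have hψ' : ∀ x, s • (h (β x)) = ψ ((P.complex.d 1 0) x) := fun x =>
        LinearMap.congr_fun hψ x
      set σ : (↑(P.complex.X 0) × A) →ₗ[R] B := α.coprod f with hσdef
      have hσ : Function.Surjective σ := by
        intro b
        obtain ⟨p, hp⟩ := hπ0 (g b)
        have hbr : b - α p ∈ LinearMap.range f := by
          rw [← hkerg]
          show g _ = 0
          rw [map_sub, hgα, hp, sub_self]
        obtain ⟨a, ha⟩ := hbr
        refine ⟨(p, a), ?_⟩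
        show α p + f a = b
        rw [ha]
        abel
      set θ : (↑(P.complex.X 0) × A) →ₗ[R] E := ψ.coprod (s • h) with hθdef
      have hkerσ : LinearMap.ker σ ≤ LinearMap.ker θ := by
        rintro ⟨p, a⟩ hx
        have hx0 : α p + f a = 0 := hx
        have hgp : π0 p = 0 := by
          have h5 := congrArg g hx0
          rw [map_add, hgα, hexact.apply_apply_eq_zero, add_zero, map_zero] at h5
          exact h5
        have hpr : p ∈ LinearMap.range (P.complex.d 1 0).hom := by rw [hex1]; exact hgp
        obtain ⟨q, rfl⟩ := hpr
        have hfa : f a = f (-β q) := by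
          rw [map_neg, hfβ]
          exact eq_neg_of_add_eq_zero_right hx0
        have ha : a = -β q := hf hfa
        show θ ((P.complex.d 1 0) q, a) = 0
        rw [ha]
        show ψ ((P.complex.d 1 0) q) + (s • h) (-β q) = 0
        rw [← hψ' q]
        simp
      obtain ⟨h', hh'⟩ := descend_of_surjective σ hσ θ hkerσ
      refine ⟨h', ?_⟩
      ext a
      have h6 := hh' (0, a)
      have h7 : σ (0, a) = f a := by
        show α 0 + f a = f a
        rw [map_zero, zero_add]
      have h8 : θ (0, a) = s • (h a) := by
        show ψ 0 + (s • h) a = s • (h a)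
        rw [map_zero, zero_add]
        rfl
      rw [h7, h8] at h6
      exact h6.symm
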